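/- Let L be a framed 4-valent graph and let Γ(L) be its parity-intersection graph. Define j(L) to be 0 if Γ(L) is disconnected, and the number of edges of Γ(L) otherwise. Then j(L) is invariant under second and third Reidemeister moves on L. -/

import Mathlib

/-- The graph `Γ(L)` of a framed 4-valent graph `L`, encoded as a Gauss diagram
on `k` circles: points of the circles are natural numbers, `circleOf` assigns
each point to its circle (unicursal component), and `D` is the set of chords
(each chord an unordered pair of points, recorded as an ordered pair).  The
vertices of `Γ` are the `k` components, and two distinct components are
adjacent iff they share an odd number of chords (intersection points). -/
def gammaGraph (k : ℕ) (circleOf : ℕ → Fin k) (D : Finset (ℕ × ℕ)) :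
    SimpleGraph (Fin k) where
  Adj i j := i ≠ j ∧ Odd ((D.filter fun c =>
      (circleOf c.1 = i ∧ circleOf c.2 = j) ∨
      (circleOf c.1 = j ∧ circleOf c.2 = i)).card)
  symm := ⟨by
    intro i j hij
    refine ⟨hij.1.symm, ?_⟩
    have heq : (D.filter fun c =>
        (circleOf c.1 = i ∧ circleOf c.2 = j) ∨
        (circleOf c.1 = j ∧ circleOf c.2 = i)) =
      (D.filter fun c =>
        (circleOf c.1 = j ∧ circleOf c.2 = i) ∨
        (circleOf c.1 = i ∧ circleOf c.2 = j)) := by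
      apply Finset.filter_congr
      intro c _
      tauto
    rw [← heq]
    exact hij.2⟩
  loopless := ⟨fun i hi => hi.1 rfl⟩

open Classical in
/-- The number `j(L)`: `0` if `Γ(L)` is disconnected, and the number of edges
of `Γ(L)` otherwise. -/
noncomputable def jNum (k : ℕ) (circleOf : ℕ → Fin k) (D : Finset (ℕ × ℕ)) : ℕ :=
  if (gammaGraph k circleOf D).Connected then (gammaGraph k circleOf D).edgeSet.ncard
  else 0

section AuxLemmas
variable {k : ℕ}

lemma pairPred_iff (circleOf : ℕ → Fin k) (i j : Fin k) (c : ℕ × ℕ) :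
    ((circleOf c.1 = i ∧ circleOf c.2 = j) ∨
      (circleOf c.1 = j ∧ circleOf c.2 = i)) ↔
      ({circleOf c.1, circleOf c.2} : Finset (Fin k)) = {i, j} := by
  rw [← Finset.coe_inj]
  push_cast
  rw [Set.pair_eq_pair_iff]

lemma gammaGraph_congr (circleOf : ℕ → Fin k) (D D' : Finset (ℕ × ℕ))
    (h : ∀ i j : Fin k,
      Odd ((D.filter fun c =>
        (circleOf c.1 = i ∧ circleOf c.2 = j) ∨
        (circleOf c.1 = j ∧ circleOf c.2 = i)).card) ↔
      Odd ((D'.filter fun c =>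
        (circleOf c.1 = i ∧ circleOf c.2 = j) ∨
        (circleOf c.1 = j ∧ circleOf c.2 = i)).card)) :
    gammaGraph k circleOf D = gammaGraph k circleOf D' := by
  ext i j
  exact and_congr_right (a := i ≠ j) fun _ => h i j

lemma jNum_congr (circleOf : ℕ → Fin k) (D D' : Finset (ℕ × ℕ))
    (h : gammaGraph k circleOf D = gammaGraph k circleOf D') :
    jNum k circleOf D = jNum k circleOf D' := by
  unfold jNum
  rw [h]

lemma parity_insert_two {α : Type*} [DecidableEq α] (P : α → Prop) [DecidablePred P]
    (D : Finset α) (c1 c2 : α) (h1 : c1 ∉ D) (h2 : c2 ∉ D) (hne : c1 ≠ c2)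
    (hPP : P c1 ↔ P c2) :
    Odd (((insert c1 (insert c2 D)).filter P).card) ↔ Odd ((D.filter P).card) := by
  by_cases hp : P c1
  · have hp2 : P c2 := hPP.mp hp
    have h2' : c2 ∉ D.filter P := fun h => h2 (Finset.mem_filter.mp h).1
    have h1' : c1 ∉ insert c2 (D.filter P) := by
      simp only [Finset.mem_insert, Finset.mem_filter]
      push_neg
      exact ⟨hne, fun h => absurd h h1⟩
    rw [Finset.filter_insert, if_pos hp, Finset.filter_insert, if_pos hp2,
      Finset.card_insert_of_notMem h1', Finset.card_insert_of_notMem h2',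
      Nat.odd_iff, Nat.odd_iff]
    omega
  · have hp2 : ¬ P c2 := fun h => hp (hPP.mpr h)
    rw [Finset.filter_insert, if_neg hp, Finset.filter_insert, if_neg hp2]

lemma card_filter_union_image {α β : Type*} [DecidableEq α] [Fintype β]
    (P : α → Prop) [DecidablePred P] (D0 : Finset α) (b : β → α)
    (hb : Function.Injective b) (hbD : ∀ l, b l ∉ D0) :
    ((D0 ∪ Finset.univ.image b).filter P).card =
      (D0.filter P).card + (Finset.univ.filter fun l => P (b l)).card := by
  have hdisj : Disjoint (D0.filter P) ((Finset.univ.image b).filter P) := by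
    refine Finset.disjoint_left.mpr ?_
    intro c hc hc'
    rcases Finset.mem_image.mp (Finset.mem_filter.mp hc').1 with ⟨l, _, rfl⟩
    exact hbD l (Finset.mem_filter.mp hc).1
  rw [Finset.filter_union, Finset.card_union_of_disjoint hdisj, Finset.filter_image,
    Finset.card_image_of_injective _ hb]

end AuxLemmas

/-- The quantity `j(L)` — zero if the parity-intersection graph `Γ(L)` is
disconnected and the number of its edges otherwise — is invariant under second
and third Reidemeister moves on the framed 4-valent graph `L`, encoded as a
Gauss diagram on `k` circles. -/
theorem stmt_17 (k : ℕ) (circleOf : ℕ → Fin k) :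
    (∀ (D : Finset (ℕ × ℕ)) (c1 c2 : ℕ × ℕ), c1 ∉ D → c2 ∉ D → c1 ≠ c2 →
      ({circleOf c1.1, circleOf c1.2} : Finset (Fin k)) =
        ({circleOf c2.1, circleOf c2.2} : Finset (Fin k)) →
      jNum k circleOf (insert c1 (insert c2 D)) = jNum k circleOf D) ∧
    (∀ (D0 : Finset (ℕ × ℕ)) (a a' : Fin 3 → ℕ × ℕ),
      Function.Injective a → Function.Injective a' →
      (∀ l, a l ∉ D0) → (∀ l, a' l ∉ D0) →
      (∀ l, circleOf (a l).1 = circleOf (a' l).1 ∧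
            circleOf (a l).2 = circleOf (a' l).2) →
      jNum k circleOf (D0 ∪ Finset.univ.image a) =
        jNum k circleOf (D0 ∪ Finset.univ.image a')) := by
  constructor
  · -- R2 move
    intro D c1 c2 h1 h2 hne hcc
    apply jNum_congr
    apply gammaGraph_congr
    intro i j
    refine parity_insert_two _ D c1 c2 h1 h2 hne ?_
    rw [pairPred_iff circleOf i j c1, pairPred_iff circleOf i j c2, hcc]
  · -- R3 move
    intro D0 a a' ha ha' haD haD' hcirc
    apply jNum_congr
    apply gammaGraph_congr
    intro i j
    rw [card_filter_union_image _ D0 a ha haD,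
      card_filter_union_image _ D0 a' ha' haD']
    have : (Finset.univ.filter fun l =>
        (circleOf (a l).1 = i ∧ circleOf (a l).2 = j) ∨
        (circleOf (a l).1 = j ∧ circleOf (a l).2 = i)) =
        (Finset.univ.filter fun l =>
        (circleOf (a' l).1 = i ∧ circleOf (a' l).2 = j) ∨
        (circleOf (a' l).1 = j ∧ circleOf (a' l).2 = i)) := by
      apply Finset.filter_congr
      intro l _
      simp only [(hcirc l).1, (hcirc l).2]
    rw [this]
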